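/- Suppose there exists a probability measure μ on (X, 𝒜) with μ absolutely continuous with respect to λ and μ invariant under T (μ ∘ T⁻¹ = μ). Then T is exact (every tail set A satisfies λ(A) = 0 or λ(X \ A) = 0) if and only if for every measurable A ⊆ X with λ(A) > 0 one has μ(T̂ⁿA) → 1 as n → ∞. -/

import Mathlib

open MeasureTheory Set Filter

/-!
Write `Bₙ = T⁻ⁿ(T̂ⁿA)`. Since `A ⊆̇ T⁻¹(T̂A)`, the sets `Bₙ` increase modulo null sets, and their
union is a tail set containing `A`; by exactness it has full measure, so by invariance
`μ(T̂ⁿA) = μ(Bₙ) → 1`. Conversely, if `A =̇ T⁻ⁿAₙ` then `T̂ⁿA ⊆̇ Aₙ` and `T̂ⁿAᶜ ⊆̇ Aₙᶜ`, so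
`μ(T̂ⁿA) + μ(T̂ⁿAᶜ) ≤ 1`; this is incompatible with both terms tending to `1`.
-/

section

variable {X : Type*} [MeasurableSpace X] {lam μ : Measure X} {T : X → X}
  {hatT : Set X → Set X} {A C : Set X}

def IsEssentialImage (lam : Measure X) (T : X → X) (hatT : Set X → Set X) : Prop :=
  ∀ A, MeasurableSet A → MeasurableSet (hatT A) ∧
    ∀ C, MeasurableSet C → (0 < lam (hatT A ∩ C) ↔ 0 < lam (A ∩ T ⁻¹' C))

def IsTailSet (lam : Measure X) (T : X → X) (A : Set X) : Prop :=
  ∀ n : ℕ, ∃ An : Set X, MeasurableSet An ∧ lam (symmDiff A (T^[n] ⁻¹' An)) = 0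

def IsExact (lam : Measure X) (T : X → X) : Prop :=
  ∀ A : Set X, MeasurableSet A → IsTailSet lam T A → lam A = 0 ∨ lam Aᶜ = 0

theorem tendsto_measure_iUnion_of_ae_monotone {s : ℕ → Set X}
    (hs : ∀ m n, m ≤ n → s m ≤ᵐ[μ] s n) :
    Tendsto (fun n => μ (s n)) atTop (nhds (μ (⋃ n, s n))) := by
  have hacc : ∀ n, μ (accumulate s n) = μ (s n) := fun n =>
    measure_congr <| EventuallyLE.antisymm
      ((Filter.EventuallyLE.countable_bUnion (S := Iic n) (to_countable _)
        fun m hm => hs m n hm).trans (iUnion₂_subset fun _ _ => subset_rfl).eventuallyLE)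
      subset_accumulate.eventuallyLE
  simpa only [hacc] using tendsto_measure_iUnion_accumulate (μ := μ) (f := s)

namespace IsEssentialImage

variable (hE : IsEssentialImage lam T hatT)
include hE

theorem measurableSet (hA : MeasurableSet A) : MeasurableSet (hatT A) := (hE A hA).1

theorem ae_le_iff (hA : MeasurableSet A) (hC : MeasurableSet C) :
    hatT A ≤ᵐ[lam] C ↔ A ≤ᵐ[lam] T ⁻¹' C := by
  simpa only [ae_le_set, sdiff_eq, preimage_compl, not_lt, nonpos_iff_eq_zero]
    using ((hE A hA).2 Cᶜ hC.compl).not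

theorem ae_le_preimage (hA : MeasurableSet A) : A ≤ᵐ[lam] T ⁻¹' hatT A :=
  (hE.ae_le_iff hA (hE.measurableSet hA)).1 (EventuallyLE.refl _ _)

theorem iterate (hT : Measurable T) (n : ℕ) : IsEssentialImage lam T^[n] hatT^[n] := by
  induction n with
  | zero => exact fun A hA => ⟨hA, fun C _ => Iff.rfl⟩
  | succ n ih =>
    intro A hA
    rw [Function.iterate_succ_apply]
    refine ⟨ih.measurableSet (hE.measurableSet hA), fun C hC => ?_⟩
    rw [(ih _ (hE.measurableSet hA)).2 C hC, (hE A hA).2 _ (hT.iterate n hC),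
      Function.iterate_succ, preimage_comp]

theorem preimage_iterate_ae_mono (hq : Measure.QuasiMeasurePreserving T lam lam)
    (hA : MeasurableSet A) {m n : ℕ} (hmn : m ≤ n) :
    T^[m] ⁻¹' hatT^[m] A ≤ᵐ[lam] T^[n] ⁻¹' hatT^[n] A := by
  obtain ⟨k, rfl⟩ := Nat.exists_eq_add_of_le' hmn
  have hAn := (hE.iterate hq.measurable m).measurableSet hA
  have := (hq.iterate m).preimage_mono_ae ((hE.iterate hq.measurable k).ae_le_preimage hAn)
  rwa [← preimage_comp, ← Function.iterate_add, ← Function.iterate_add_apply] at this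

theorem isTailSet_iUnion_preimage_iterate (hq : Measure.QuasiMeasurePreserving T lam lam)
    (hA : MeasurableSet A) : IsTailSet lam T (⋃ m, T^[m] ⁻¹' hatT^[m] A) := by
  intro n
  refine ⟨⋃ m, T^[m] ⁻¹' hatT^[m + n] A, MeasurableSet.iUnion fun m =>
    hq.measurable.iterate m ((hE.iterate hq.measurable _).measurableSet hA), ?_⟩
  simp only [measure_symmDiff_eq_zero_iff, preimage_iUnion, ← preimage_comp,
    ← Function.iterate_add]
  refine (Filter.EventuallyLE.countable_iUnion fun m => ?_).antisymm
    (iUnion_subset fun m => subset_iUnion (fun m => T^[m] ⁻¹' hatT^[m] A) (m + n)).eventuallyLE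
  exact hE.preimage_iterate_ae_mono hq hA (m.le_add_right n)

theorem tendsto_measure_iterate_of_isExact (hq : Measure.QuasiMeasurePreserving T lam lam)
    (hμ : MeasurePreserving T μ μ) [IsProbabilityMeasure μ] (hac : μ ≪ lam)
    (hexact : IsExact lam T) (hA : MeasurableSet A) (hApos : 0 < lam A) :
    Tendsto (fun n => μ (hatT^[n] A)) atTop (nhds 1) := by
  have hmeas n : MeasurableSet (hatT^[n] A) := (hE.iterate hq.measurable n).measurableSet hA
  set B : ℕ → Set X := fun n => T^[n] ⁻¹' hatT^[n] A
  have hBm : MeasurableSet (⋃ n, B n) := .iUnion fun n => hq.measurable.iterate n (hmeas n)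
  have hBu : μ (⋃ n, B n) = 1 := by
    rcases hexact _ hBm (hE.isTailSet_iUnion_preimage_iterate hq hA) with h | h
    · exact absurd h (hApos.trans_le (measure_mono (subset_iUnion B 0))).ne'
    · exact (prob_compl_eq_zero_iff hBm).1 (hac h)
  have hmono m n (hmn : m ≤ n) : B m ≤ᵐ[μ] B n :=
    hac.ae_le (hE.preimage_iterate_ae_mono hq hA hmn)
  rw [← hBu]
  exact (tendsto_measure_iUnion_of_ae_monotone hmono).congr fun n =>
    (hμ.iterate n).measure_preimage (hmeas n).nullMeasurableSet

theorem measure_add_measure_compl_le_one [IsProbabilityMeasure μ] (hac : μ ≪ lam)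
    (hA : MeasurableSet A) (hC : MeasurableSet C) (hAC : A =ᵐ[lam] T ⁻¹' C) :
    μ (hatT A) + μ (hatT Aᶜ) ≤ 1 := by
  have h : hatT A ≤ᵐ[lam] C := (hE.ae_le_iff hA hC).2 hAC.le
  have hc : hatT Aᶜ ≤ᵐ[lam] Cᶜ := (hE.ae_le_iff hA.compl hC.compl).2 hAC.compl.le
  calc μ (hatT A) + μ (hatT Aᶜ) ≤ μ C + μ Cᶜ :=
        add_le_add (measure_mono_ae (hac.ae_le h)) (measure_mono_ae (hac.ae_le hc))
    _ = 1 := prob_add_prob_compl hC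

theorem isExact_of_tendsto (hT : Measurable T) [IsProbabilityMeasure μ] (hac : μ ≪ lam)
    (hconv : ∀ A : Set X, MeasurableSet A → 0 < lam A →
      Tendsto (fun n : ℕ => μ (hatT^[n] A)) atTop (nhds 1)) :
    IsExact lam T := by
  intro A hA htail
  by_contra! h
  have hsum n : μ (hatT^[n] A) + μ (hatT^[n] Aᶜ) ≤ 1 := by
    obtain ⟨An, hAn, hnull⟩ := htail n
    exact (hE.iterate hT n).measure_add_measure_compl_le_one hac hA hAn
      (measure_symmDiff_eq_zero_iff.1 hnull)
  have h2 := le_of_tendsto' ((hconv A hA (pos_iff_ne_zero.2 h.1)).add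
    (hconv Aᶜ hA.compl (pos_iff_ne_zero.2 h.2))) hsum
  norm_num at h2

end IsEssentialImage

end

theorem stmt_19_general {X : Type*} [MeasurableSpace X]
    (lam : Measure X)
    (T : X → X) (hT : Measurable T) (hnp : lam.map T ≪ lam)
    (hatT : Set X → Set X)
    (hm : ∀ A : Set X, MeasurableSet A → MeasurableSet (hatT A))
    (hchar : ∀ A : Set X, MeasurableSet A → ∀ C : Set X, MeasurableSet C →
      (0 < lam (hatT A ∩ C) ↔ 0 < lam (A ∩ T ⁻¹' C)))
    (μ : Measure X) [IsProbabilityMeasure μ] (hac : μ ≪ lam)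
    (hinv : μ.map T = μ) :
    (∀ A : Set X, MeasurableSet A →
        (∀ n : ℕ, ∃ An : Set X, MeasurableSet An ∧
          lam (symmDiff A (T^[n] ⁻¹' An)) = 0) →
        lam A = 0 ∨ lam Aᶜ = 0) ↔
    (∀ A : Set X, MeasurableSet A → 0 < lam A →
      Tendsto (fun n : ℕ => μ (hatT^[n] A)) atTop (nhds 1)) := by
  have hE : IsEssentialImage lam T hatT := fun A hA => ⟨hm A hA, hchar A hA⟩
  exact ⟨fun hexact _ hA hApos =>
      hE.tendsto_measure_iterate_of_isExact ⟨hT, hnp⟩ ⟨hT, hinv⟩ hac hexact hA hApos,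
    hE.isExact_of_tendsto hT hac⟩

/-- If `T` admits an invariant probability measure `μ ≪ λ`, then `T` is
exact iff `μ(T̂ⁿA) → 1` for every measurable `A` with `λ(A) > 0`. -/
theorem stmt_19 {X : Type*} [MeasurableSpace X]
    (lam : Measure X) [SigmaFinite lam]
    (T : X → X) (hT : Measurable T) (hnp : lam.map T ≪ lam)
    (hatT : Set X → Set X)
    (hm : ∀ A : Set X, MeasurableSet A → MeasurableSet (hatT A))
    (hchar : ∀ A : Set X, MeasurableSet A → ∀ C : Set X, MeasurableSet C →
      (0 < lam (hatT A ∩ C) ↔ 0 < lam (A ∩ T ⁻¹' C)))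
    (μ : Measure X) [IsProbabilityMeasure μ] (hac : μ ≪ lam)
    (hinv : μ.map T = μ) :
    (∀ A : Set X, MeasurableSet A →
        (∀ n : ℕ, ∃ An : Set X, MeasurableSet An ∧
          lam (symmDiff A (T^[n] ⁻¹' An)) = 0) →
        lam A = 0 ∨ lam Aᶜ = 0) ↔
    (∀ A : Set X, MeasurableSet A → 0 < lam A →
      Tendsto (fun n : ℕ => μ (hatT^[n] A)) atTop (nhds 1)) :=
  stmt_19_general lam T hT hnp hatT hm hchar μ hac hinv
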